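/- Let s be a positive integer, let Π be the (2s+2)×(2s+2) permutation matrix of the (2s+2)-cycle, i.e., Π i j = 1 if j ≡ i + 1 (mod 2s+2) and Π i j = 0 otherwise, and let L = Π + Π² + ⋯ + Πˢ. Then M(L) is the adjacency matrix of a directed strongly regular graph with parameters (4(s+1), 2s+1, s+1, s, s); that is, M(L)·M(L) = s·J + I (equivalently M(L)² = (s+1)·I + s·M(L) + s·(J − I − M(L))) and M(L)·J = J·M(L) = (2s+1)·J. -/

import Mathlib

open Matrix Kronecker

/-- The all-ones square matrix over `ℤ` indexed by `α`. -/
def allOnes (α : Type*) : Matrix α α ℤ := Matrix.of fun _ _ => 1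

/-- `B` is the adjacency matrix of a directed strongly regular graph
with parameters `(n, k, t, l, m)`. -/
def IsAdjDSRG {α : Type*} [Fintype α] [DecidableEq α]
    (B : Matrix α α ℤ) (n k t l m : ℤ) : Prop :=
  (Fintype.card α : ℤ) = n ∧
  (∀ i j, B i j = 0 ∨ B i j = 1) ∧
  (∀ i, B i i = 0) ∧
  B * B = t • (1 : Matrix α α ℤ) + l • B + m • (allOnes α - 1 - B) ∧
  B * allOnes α = k • allOnes α ∧
  allOnes α * B = k • allOnes α

/-- `A` is the adjacency matrix of a regular tournament of order `n` with valency `k`. -/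
def IsRegularTournament {n : ℕ} (k : ℕ) (A : Matrix (Fin n) (Fin n) ℤ) : Prop :=
  (∀ i j, A i j = 0 ∨ A i j = 1) ∧
  (∀ i, A i i = 0) ∧
  A + Aᵀ = allOnes (Fin n) - 1 ∧
  A * allOnes (Fin n) = (k : ℤ) • allOnes (Fin n) ∧
  allOnes (Fin n) * A = (k : ℤ) • allOnes (Fin n)

/-- The block matrix `M(X) = [[X, Xᵀ + I], [X + I, Xᵀ]]`. -/
def MBlock {α : Type*} [DecidableEq α] (X : Matrix α α ℤ) :
    Matrix (α ⊕ α) (α ⊕ α) ℤ :=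
  Matrix.fromBlocks X (Xᵀ + 1) (X + 1) Xᵀ

/-!
Write `Π` for the cyclic shift of order `n = 2s + 2`, `Q = Π ^ (s + 1)` and
`L = Π + ⋯ + Π ^ s`. All of these are polynomials in `Π`, so they commute. Since `Πᵀ = Π⁻¹`,
`Lᵀ = Π ^ (n - 1) + ⋯ + Π ^ (n - s) = L Q`, and the geometric sum `1 + Π + ⋯ + Π ^ (n - 1) = J`
splits as `(1 + L)(1 + Q)`. Hence `L² + L Lᵀ + L + Lᵀ = L (1 + L)(1 + Q) = L J = s J`.

For any `X` commuting with `Xᵀ`, multiplying out the blocks of `M(X)` shows that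
`X² + X Xᵀ + X + Xᵀ = c J` (together with its transpose) gives `M(X)² = c J + I`, which is the
DSRG equation with `t = c + 1` and `λ = μ = c`. Row and column sums and the `0/1` pattern of
`M(X)` are read off from those of `X`.
-/

section MBlock

variable {α : Type*}

lemma transpose_allOnes : (allOnes α)ᵀ = allOnes α := rfl

lemma fromBlocks_allOnes :
    fromBlocks (allOnes α) (allOnes α) (allOnes α) (allOnes α) = allOnes (α ⊕ α) := by
  ext (i | i) (j | j) <;> rfl

variable [DecidableEq α] {X : Matrix α α ℤ}

lemma add_one_apply_eq_zero_or_one (h01 : ∀ i j, X i j = 0 ∨ X i j = 1)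
    (hdiag : ∀ i, X i i = 0) (i j : α) : (X + 1) i j = 0 ∨ (X + 1) i j = 1 := by
  rcases eq_or_ne i j with rfl | hij
  · simp [hdiag]
  · simpa [one_apply_ne hij] using h01 i j

lemma MBlock_apply_eq_zero_or_one (h01 : ∀ i j, X i j = 0 ∨ X i j = 1)
    (hdiag : ∀ i, X i i = 0) (i j : α ⊕ α) : MBlock X i j = 0 ∨ MBlock X i j = 1 := by
  rcases i with i | i <;> rcases j with j | j
  · exact h01 i j
  · exact add_one_apply_eq_zero_or_one (X := Xᵀ) (fun i j => h01 j i) hdiag i j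
  · exact add_one_apply_eq_zero_or_one h01 hdiag i j
  · exact h01 j i

lemma MBlock_apply_self (hdiag : ∀ i, X i i = 0) (i : α ⊕ α) : MBlock X i i = 0 := by
  rcases i with i | i <;> exact hdiag i

variable [Fintype α]

lemma MBlock_mul_self {c : ℤ} (hcomm : Commute X Xᵀ)
    (hsq : X * X + X * Xᵀ + X + Xᵀ = c • allOnes α) :
    MBlock X * MBlock X = c • allOnes (α ⊕ α) + 1 := by
  have hsqT : Xᵀ * Xᵀ + Xᵀ * X + Xᵀ + X = c • allOnes α := by
    rw [← transpose_allOnes, ← transpose_smul, ← hsq]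
    simp only [transpose_add, transpose_mul, transpose_transpose, hcomm.eq]
  rw [MBlock, fromBlocks_multiply, ← fromBlocks_allOnes, fromBlocks_smul, ← fromBlocks_one,
    fromBlocks_add, fromBlocks_inj]
  simp only [mul_add, add_mul, mul_one, one_mul, add_zero, hcomm.eq] at hsq ⊢
  refine ⟨?_, ?_, ?_, ?_⟩
  · rw [← hsq]; abel
  · rw [← hsqT]; abel
  · rw [← hsq]; abel
  · rw [← hsqT]; abel

lemma MBlock_mul_allOnes {k : ℤ} (hXJ : X * allOnes α = k • allOnes α)
    (hJX : allOnes α * X = k • allOnes α) :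
    MBlock X * allOnes (α ⊕ α) = (2 * k + 1) • allOnes (α ⊕ α) := by
  have hXtJ : Xᵀ * allOnes α = k • allOnes α := by
    rw [← transpose_allOnes, ← transpose_smul, ← hJX, transpose_mul]
  rw [MBlock, ← fromBlocks_allOnes, fromBlocks_multiply, fromBlocks_smul]
  simp only [add_mul, one_mul, hXJ, hXtJ]
  congr 1 <;> module

lemma allOnes_mul_MBlock {k : ℤ} (hXJ : X * allOnes α = k • allOnes α)
    (hJX : allOnes α * X = k • allOnes α) :
    allOnes (α ⊕ α) * MBlock X = (2 * k + 1) • allOnes (α ⊕ α) := by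
  have hJXt : allOnes α * Xᵀ = k • allOnes α := by
    rw [← transpose_allOnes, ← transpose_smul, ← hXJ, transpose_mul]
  rw [MBlock, ← fromBlocks_allOnes, fromBlocks_multiply, fromBlocks_smul]
  simp only [mul_add, mul_one, hJX, hJXt]
  congr 1 <;> module

theorem isAdjDSRG_MBlock {k c : ℤ} (h01 : ∀ i j, X i j = 0 ∨ X i j = 1)
    (hdiag : ∀ i, X i i = 0) (hcomm : Commute X Xᵀ)
    (hsq : X * X + X * Xᵀ + X + Xᵀ = c • allOnes α)
    (hXJ : X * allOnes α = k • allOnes α) (hJX : allOnes α * X = k • allOnes α) :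
    IsAdjDSRG (MBlock X) (2 * Fintype.card α) (2 * k + 1) (c + 1) c c := by
  refine ⟨by simp [two_mul], MBlock_apply_eq_zero_or_one h01 hdiag, MBlock_apply_self hdiag,
    ?_, MBlock_mul_allOnes hXJ hJX, allOnes_mul_MBlock hXJ hJX⟩
  rw [MBlock_mul_self hcomm hsq]
  module

end MBlock

def cyclicShift (n : ℕ) : Matrix (Fin n) (Fin n) ℤ :=
  of fun i j => if (j : ℕ) = ((i : ℕ) + 1) % n then 1 else 0

namespace cyclicShift

open Fin.NatCast

variable {n : ℕ} [NeZero n]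

lemma apply (i j : Fin n) : cyclicShift n i j = if j = i + 1 then 1 else 0 := by
  simp only [cyclicShift, of_apply, Fin.ext_iff, Fin.val_add, Fin.val_one', Nat.add_mod_mod]

lemma pow_apply (k : ℕ) (i j : Fin n) :
    (cyclicShift n ^ k) i j = if j = i + k then 1 else 0 := by
  induction k generalizing j with
  | zero => simp [one_apply, eq_comm]
  | succ k ih =>
    simp only [pow_succ, mul_apply, ih, apply, ite_mul, one_mul, zero_mul,
      Finset.sum_ite_eq', Finset.mem_univ, if_true, Nat.cast_succ, add_assoc]

lemma eq_add_natCast_iff {i j : Fin n} {k : ℕ} (hk : k < n) :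
    j = i + k ↔ k = ((j - i : Fin n) : ℕ) := by
  rw [eq_comm, ← eq_sub_iff_add_eq', ← Fin.val_cast_of_lt hk, Fin.val_inj, Fin.val_cast_of_lt hk]

lemma sum_pow_apply {S : Finset ℕ} (hS : ∀ k ∈ S, k < n) (i j : Fin n) :
    (∑ k ∈ S, cyclicShift n ^ k) i j = if ((j - i : Fin n) : ℕ) ∈ S then 1 else 0 := by
  rw [Matrix.sum_apply, ← Finset.sum_ite_eq' S _ fun _ => (1 : ℤ)]
  exact Finset.sum_congr rfl fun k hk => by
    rw [pow_apply]; exact if_congr (eq_add_natCast_iff (hS k hk)) rfl rfl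

lemma pow_self : cyclicShift n ^ n = 1 := by
  ext i j
  simp [pow_apply, one_apply, eq_comm]

lemma sum_range_pow : ∑ k ∈ Finset.range n, cyclicShift n ^ k = allOnes (Fin n) := by
  ext i j
  simp [sum_pow_apply (fun k hk => Finset.mem_range.mp hk), allOnes]

lemma pow_mul_allOnes (k : ℕ) : cyclicShift n ^ k * allOnes (Fin n) = allOnes (Fin n) := by
  have h : cyclicShift n * allOnes (Fin n) = allOnes (Fin n) := by
    rw [← sub_eq_zero, ← sum_range_pow, ← sub_one_mul, mul_geom_sum, pow_self, sub_self]
  induction k with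
  | zero => rw [pow_zero, one_mul]
  | succ k ih => rw [pow_succ, mul_assoc, h, ih]

lemma allOnes_mul_pow (k : ℕ) : allOnes (Fin n) * cyclicShift n ^ k = allOnes (Fin n) := by
  have h : allOnes (Fin n) * cyclicShift n = allOnes (Fin n) := by
    rw [← sub_eq_zero, ← sum_range_pow, ← mul_sub_one, geom_sum_mul, pow_self, sub_self]
  induction k with
  | zero => rw [pow_zero, mul_one]
  | succ k ih => rw [pow_succ', ← mul_assoc, h, ih]

lemma transpose_pow {k : ℕ} (hk : k ≤ n) : (cyclicShift n ^ k)ᵀ = cyclicShift n ^ (n - k) := by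
  ext i j
  have hcast : ((n - k : ℕ) : Fin n) = -k := by
    rw [eq_neg_iff_add_eq_zero, ← Nat.cast_add, Nat.sub_add_cancel hk, Fin.natCast_self]
  rw [transpose_apply, pow_apply, pow_apply, hcast, ← sub_eq_add_neg]
  exact if_congr (by rw [eq_sub_iff_add_eq, eq_comm]) rfl rfl

end cyclicShift

def shiftSum (s : ℕ) : Matrix (Fin (2 * s + 2)) (Fin (2 * s + 2)) ℤ :=
  ∑ k ∈ Finset.Icc 1 s, cyclicShift (2 * s + 2) ^ k

namespace shiftSum

variable (s : ℕ)

lemma apply (i j : Fin (2 * s + 2)) :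
    shiftSum s i j = if ((j - i : Fin (2 * s + 2)) : ℕ) ∈ Finset.Icc 1 s then 1 else 0 :=
  cyclicShift.sum_pow_apply (fun k hk => by rw [Finset.mem_Icc] at hk; omega) i j

lemma apply_eq_zero_or_one (i j : Fin (2 * s + 2)) : shiftSum s i j = 0 ∨ shiftSum s i j = 1 := by
  rw [apply]
  split_ifs <;> simp

lemma apply_self (i : Fin (2 * s + 2)) : shiftSum s i i = 0 := by
  simp [apply]

lemma mul_allOnes : shiftSum s * allOnes _ = (s : ℤ) • allOnes _ := by
  simp [shiftSum, Finset.sum_mul, cyclicShift.pow_mul_allOnes]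

lemma allOnes_mul : allOnes _ * shiftSum s = (s : ℤ) • allOnes _ := by
  simp [shiftSum, Finset.mul_sum, cyclicShift.allOnes_mul_pow]

lemma commute_pow (k : ℕ) : Commute (shiftSum s) (cyclicShift (2 * s + 2) ^ k) :=
  Commute.sum_left _ _ _ fun _ _ => Commute.pow_pow_self _ _ _

lemma transpose_eq : (shiftSum s)ᵀ = shiftSum s * cyclicShift (2 * s + 2) ^ (s + 1) := by
  rw [shiftSum, transpose_sum, Finset.sum_mul]
  refine Finset.sum_nbij' (fun k => s + 1 - k) (fun k => s + 1 - k) ?_ ?_ ?_ ?_ ?_ <;>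
    intro k hk <;> rw [Finset.mem_Icc] at hk
  · rw [Finset.mem_Icc]; omega
  · rw [Finset.mem_Icc]; omega
  · omega
  · omega
  · rw [cyclicShift.transpose_pow (by omega), ← pow_add]
    congr 1
    omega

lemma sum_range_succ_pow :
    ∑ k ∈ Finset.range (s + 1), cyclicShift (2 * s + 2) ^ k = 1 + shiftSum s := by
  rw [Finset.range_eq_Ico, Finset.sum_eq_sum_Ico_succ_bot (Nat.succ_pos s), pow_zero,
    zero_add, Nat.succ_eq_add_one, Finset.Ico_add_one_right_eq_Icc, shiftSum]

lemma one_add_mul_one_add_pow :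
    (1 + shiftSum s) * (1 + cyclicShift (2 * s + 2) ^ (s + 1)) = allOnes _ := by
  have hrange : Finset.range (2 * s + 2) = Finset.range ((s + 1) + (s + 1)) := by
    congr 1; ring
  rw [← cyclicShift.sum_range_pow, hrange, Finset.sum_range_add]
  have hcomm : Commute (1 + shiftSum s) (cyclicShift (2 * s + 2) ^ (s + 1)) :=
    (Commute.one_left _).add_left (commute_pow s _)
  simp only [pow_add (cyclicShift (2 * s + 2)) (s + 1), ← Finset.mul_sum, sum_range_succ_pow,
    ← hcomm.eq]
  noncomm_ring

lemma mul_self_add_mul_transpose_add :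
    shiftSum s * shiftSum s + shiftSum s * (shiftSum s)ᵀ + shiftSum s + (shiftSum s)ᵀ =
      (s : ℤ) • allOnes _ := by
  rw [← mul_allOnes, ← one_add_mul_one_add_pow, transpose_eq]
  noncomm_ring

lemma commute_transpose : Commute (shiftSum s) (shiftSum s)ᵀ := by
  rw [transpose_eq]
  exact (Commute.refl _).mul_right (commute_pow s _)

end shiftSum

theorem stmt11_general (s : ℕ) :
    let P : Matrix (Fin (2 * s + 2)) (Fin (2 * s + 2)) ℤ :=
      Matrix.of fun i j => if (j : ℕ) = ((i : ℕ) + 1) % (2 * s + 2) then 1 else 0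
    let L := ∑ i ∈ Finset.Icc 1 s, P ^ i
    IsAdjDSRG (MBlock L)
      (4 * ((s : ℤ) + 1)) (2 * (s : ℤ) + 1) ((s : ℤ) + 1) (s : ℤ) (s : ℤ) ∧
    MBlock L * MBlock L =
      (s : ℤ) • allOnes (Fin (2 * s + 2) ⊕ Fin (2 * s + 2)) + 1 := by
  intro P L
  have hcard : 2 * (Fintype.card (Fin (2 * s + 2)) : ℤ) = 4 * ((s : ℤ) + 1) := by
    rw [Fintype.card_fin]; push_cast; ring
  exact ⟨hcard ▸ isAdjDSRG_MBlock (shiftSum.apply_eq_zero_or_one s) (shiftSum.apply_self s)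
      (shiftSum.commute_transpose s) (shiftSum.mul_self_add_mul_transpose_add s)
      (shiftSum.mul_allOnes s) (shiftSum.allOnes_mul s),
    MBlock_mul_self (shiftSum.commute_transpose s) (shiftSum.mul_self_add_mul_transpose_add s)⟩

/-- Lemma 7: with `Π` the permutation matrix of the `(2s+2)`-cycle and
`L = Π + Π² + ⋯ + Πˢ`, the matrix `M(L)` is the adjacency matrix of a
DSRG `(4(s+1), 2s+1, s+1, s, s)`. -/
theorem stmt11 (s : ℕ) (hs : 0 < s) :
    let P : Matrix (Fin (2 * s + 2)) (Fin (2 * s + 2)) ℤ :=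
      Matrix.of fun i j => if (j : ℕ) = ((i : ℕ) + 1) % (2 * s + 2) then 1 else 0
    let L := ∑ i ∈ Finset.Icc 1 s, P ^ i
    IsAdjDSRG (MBlock L)
      (4 * ((s : ℤ) + 1)) (2 * (s : ℤ) + 1) ((s : ℤ) + 1) (s : ℤ) (s : ℤ) ∧
    MBlock L * MBlock L =
      (s : ℤ) • allOnes (Fin (2 * s + 2) ⊕ Fin (2 * s + 2)) + 1 :=
  stmt11_general s
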